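/- arXiv:2601.18046 — 5 statements merged into one kernel-verified Lean document; each statement's English description precedes it below -/
import Mathlib

section
/- Let R₀ > 0 and let E, H : (0, R₀) → ℝ be differentiable functions with E(R) ≥ 0 and H(R) > 0 for all R ∈ (0, R₀). Assume that for every R ∈ (0, R₀): (i) E(R) ≤ (R/2) H′(R), and (ii) (H′(R))² ≤ (2/R) H(R) E′(R). Then the frequency function N(R) := E(R)/H(R) is monotonically nondecreasing on (0, R₀). -/
/-!
The numerator of `N' = (E' H - E H') / H²` is nonnegative: (i) and `E ≥ 0` force `H' ≥ 0`,
and then `E H' ≤ (R/2) H'² ≤ H E'` by (i) and (ii).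
-/

open Set

lemma mul_le_mul_of_almgren_bounds {r e h e' h' : ℝ} (hr : 0 < r) (he : 0 ≤ e)
    (h₁ : e ≤ r / 2 * h') (h₂ : h' ^ 2 ≤ 2 / r * h * e') :
    e * h' ≤ e' * h := by
  have hh' : 0 ≤ h' := (mul_nonneg_iff_of_pos_left (by positivity)).1 (he.trans h₁)
  calc e * h' ≤ r / 2 * h' * h' := mul_le_mul_of_nonneg_right h₁ hh'
    _ = r / 2 * h' ^ 2 := by ring
    _ ≤ r / 2 * (2 / r * h * e') := by gcongr
    _ = e' * h := by field_simp

lemma monotoneOn_div_of_mul_deriv_le {D : Set ℝ} (hD : Convex ℝ D) {f g : ℝ → ℝ}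
    (hf : ∀ x ∈ D, DifferentiableAt ℝ f x) (hg : ∀ x ∈ D, DifferentiableAt ℝ g x)
    (hg₀ : ∀ x ∈ D, g x ≠ 0)
    (hfg : ∀ x ∈ interior D, f x * deriv g x ≤ deriv f x * g x) :
    MonotoneOn (fun x => f x / g x) D := by
  have hdiff : ∀ x ∈ D, DifferentiableAt ℝ (fun x => f x / g x) x :=
    fun x hx => (hf x hx).div (hg x hx) (hg₀ x hx)
  refine monotoneOn_of_deriv_nonneg hD
    (fun x hx => (hdiff x hx).continuousAt.continuousWithinAt)
    (fun x hx => (hdiff x (interior_subset hx)).differentiableWithinAt) fun x hx => ?_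
  have hxD := interior_subset hx
  rw [deriv_fun_div (hf x hxD) (hg x hxD) (hg₀ x hxD)]
  exact div_nonneg (sub_nonneg.2 (hfg x hx)) (sq_nonneg _)

theorem stmt_3_general (R₀ : ℝ) (E H : ℝ → ℝ)
    (hEdiff : ∀ R ∈ Ioo (0 : ℝ) R₀, DifferentiableAt ℝ E R)
    (hHdiff : ∀ R ∈ Ioo (0 : ℝ) R₀, DifferentiableAt ℝ H R)
    (hEpos : ∀ R ∈ Ioo (0 : ℝ) R₀, 0 ≤ E R)
    (hHpos : ∀ R ∈ Ioo (0 : ℝ) R₀, 0 < H R)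
    (h1 : ∀ R ∈ Ioo (0 : ℝ) R₀, E R ≤ (R / 2) * deriv H R)
    (h2 : ∀ R ∈ Ioo (0 : ℝ) R₀, (deriv H R) ^ 2 ≤ (2 / R) * H R * deriv E R) :
    MonotoneOn (fun R => E R / H R) (Ioo (0 : ℝ) R₀) := by
  refine monotoneOn_div_of_mul_deriv_le (convex_Ioo 0 R₀) hEdiff hHdiff
    (fun R hR => (hHpos R hR).ne') fun R hR => ?_
  rw [interior_Ioo] at hR
  exact mul_le_mul_of_almgren_bounds hR.1 (hEpos R hR) (h1 R hR) (h2 R hR)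

/-- Almgren-type monotonicity of the frequency function `N = E/H`
under the differential inequalities `E ≤ (R/2) H'` and `(H')² ≤ (2/R) H E'`. -/
theorem stmt_3 (R₀ : ℝ) (hR₀ : 0 < R₀) (E H : ℝ → ℝ)
    (hEdiff : ∀ R ∈ Ioo (0 : ℝ) R₀, DifferentiableAt ℝ E R)
    (hHdiff : ∀ R ∈ Ioo (0 : ℝ) R₀, DifferentiableAt ℝ H R)
    (hEpos : ∀ R ∈ Ioo (0 : ℝ) R₀, 0 ≤ E R)
    (hHpos : ∀ R ∈ Ioo (0 : ℝ) R₀, 0 < H R)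
    (h1 : ∀ R ∈ Ioo (0 : ℝ) R₀, E R ≤ (R / 2) * deriv H R)
    (h2 : ∀ R ∈ Ioo (0 : ℝ) R₀, (deriv H R) ^ 2 ≤ (2 / R) * H R * deriv E R) :
    MonotoneOn (fun R => E R / H R) (Ioo (0 : ℝ) R₀) :=
  stmt_3_general R₀ E H hEdiff hHdiff hEpos hHpos h1 h2
end

section
/- Let n ≥ 1, let (X, d) be a metric space, and let f : ℝⁿ → X be continuous. Suppose there are constants C₁ ≥ 0 and R₀ > 0 such that for every x ∈ ℝⁿ and every 0 < R ≤ R₀, ∫_{B_R(x)} d(f(y), f(x))² dy ≤ C₁ R^{n+2}. Then there is a constant c = c(n), depending only on n, such that d(f(x₁), f(x₂)) ≤ c √C₁ |x₁ − x₂| for all x₁, x₂ ∈ ℝⁿ with |x₁ − x₂| ≤ R₀. In particular f is Lipschitz continuous on scales up to R₀. -/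
open Set MeasureTheory Metric

/-! Write `r = |x₁ - x₂|`. The ball of radius `r / 2` about the midpoint of `x₁` and `x₂` lies in
the balls of radius `r` about both points, so averaging
`d(f x₁, f x₂)² ≤ 2 d(f y, f x₁)² + 2 d(f y, f x₂)²` over `y` in it gives
`(r / 2)ⁿ |B₁| d(f x₁, f x₂)² ≤ 4 C₁ r^(n+2)`, where `|B₁|` is the volume of the unit ball;
that is, `d(f x₁, f x₂) ≤ √(2^(n+2) / |B₁|) √C₁ r`. -/

lemma sq_dist_le_two_mul_sq_dist_add {X : Type*} [PseudoMetricSpace X] (p q y : X) :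
    dist p q ^ 2 ≤ 2 * dist y p ^ 2 + 2 * dist y q ^ 2 :=
  calc dist p q ^ 2 ≤ (dist y p + dist y q) ^ 2 := by
        gcongr; exact dist_triangle_left p q y
    _ ≤ 2 * (dist y p ^ 2 + dist y q ^ 2) := add_sq_le
    _ = 2 * dist y p ^ 2 + 2 * dist y q ^ 2 := mul_add _ _ _

lemma measureReal_mul_sq_dist_le {α X : Type*} [MeasurableSpace α] [PseudoMetricSpace X]
    {μ : Measure α} {s t₁ t₂ : Set α} (g : α → X) (p q : X) (hs : μ s ≠ ⊤)
    (hst₁ : s ⊆ t₁) (hst₂ : s ⊆ t₂)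
    (hg₁ : IntegrableOn (fun y ↦ dist (g y) p ^ 2) t₁ μ)
    (hg₂ : IntegrableOn (fun y ↦ dist (g y) q ^ 2) t₂ μ) :
    μ.real s * dist p q ^ 2 ≤
      2 * ∫ y in t₁, dist (g y) p ^ 2 ∂μ + 2 * ∫ y in t₂, dist (g y) q ^ 2 ∂μ := by
  have hs₁ := (hg₁.mono_set hst₁).const_mul 2
  have hs₂ := (hg₂.mono_set hst₂).const_mul 2
  have hmono : ∀ {t : Set α} {z : X}, IntegrableOn (fun y ↦ dist (g y) z ^ 2) t μ → s ⊆ t →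
      ∫ y in s, dist (g y) z ^ 2 ∂μ ≤ ∫ y in t, dist (g y) z ^ 2 ∂μ := fun hg hst ↦
    setIntegral_mono_set hg (.of_forall fun _ ↦ by positivity) hst.eventuallyLE
  calc μ.real s * dist p q ^ 2 = ∫ _ in s, dist p q ^ 2 ∂μ := by
        rw [setIntegral_const, smul_eq_mul]
    _ ≤ ∫ y in s, (2 * dist (g y) p ^ 2 + 2 * dist (g y) q ^ 2) ∂μ :=
        setIntegral_mono (integrableOn_const hs) (by exact hs₁.add hs₂)
          fun y ↦ sq_dist_le_two_mul_sq_dist_add p q (g y)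
    _ = 2 * ∫ y in s, dist (g y) p ^ 2 ∂μ + 2 * ∫ y in s, dist (g y) q ^ 2 ∂μ := by
        rw [integral_add hs₁ hs₂, integral_const_mul, integral_const_mul]
    _ ≤ 2 * ∫ y in t₁, dist (g y) p ^ 2 ∂μ + 2 * ∫ y in t₂, dist (g y) q ^ 2 ∂μ := by
        gcongr 2 * ?_ + 2 * ?_
        exacts [hmono hg₁ hst₁, hmono hg₂ hst₂]

lemma measureReal_ball_pos {α : Type*} [PseudoMetricSpace α] [ProperSpace α] [MeasurableSpace α]
    (μ : Measure α) [μ.IsOpenPosMeasure] [IsFiniteMeasureOnCompacts μ] (x : α) {r : ℝ}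
    (hr : 0 < r) : 0 < μ.real (ball x r) :=
  ENNReal.toReal_pos (measure_ball_pos μ x hr).ne' measure_ball_lt_top.ne

section AddHaar

variable {E X : Type*} [NormedAddCommGroup E] [NormedSpace ℝ E] [FiniteDimensional ℝ E]
  [MeasurableSpace E] [BorelSpace E] [PseudoMetricSpace X] (μ : Measure E) [μ.IsAddHaarMeasure]

lemma addHaar_real_ball_of_pos (x : E) {r : ℝ} (hr : 0 < r) :
    μ.real (ball x r) = r ^ Module.finrank ℝ E * μ.real (ball 0 1) := by
  rw [measureReal_def, Measure.addHaar_ball_of_pos μ x hr, ENNReal.toReal_mul,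
    ENNReal.toReal_ofReal (by positivity), measureReal_def]

lemma half_dist_pow_mul_sq_dist_le_integral_ball {f : E → X} (hf : Continuous f) {x₁ x₂ : E} (h : x₁ ≠ x₂) :
    (dist x₁ x₂ / 2) ^ Module.finrank ℝ E * μ.real (ball (0 : E) 1) * dist (f x₁) (f x₂) ^ 2 ≤
      2 * ∫ y in ball x₁ (dist x₁ x₂), dist (f y) (f x₁) ^ 2 ∂μ +
        2 * ∫ y in ball x₂ (dist x₁ x₂), dist (f y) (f x₂) ^ 2 ∂μ := by
  set r := dist x₁ x₂
  have hr : 0 < r := dist_pos.2 h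
  have hint : ∀ z c : E, IntegrableOn (fun y ↦ dist (f y) (f z) ^ 2) (ball c r) μ := fun z c ↦
    (((hf.dist continuous_const).pow 2).locallyIntegrable.integrableOn_isCompact
      (isCompact_closedBall c r)).mono_set ball_subset_closedBall
  have hsub : ∀ z ∈ ({x₁, x₂} : Set E), ball (midpoint ℝ x₁ x₂) (r / 2) ⊆ ball z r := by
    rintro z (rfl | rfl) <;> refine ball_subset_ball' ?_
    · rw [dist_midpoint_left, Real.norm_ofNat]; linarith
    · rw [dist_midpoint_right, Real.norm_ofNat]; linarith
  rw [← addHaar_real_ball_of_pos μ (midpoint ℝ x₁ x₂) (half_pos hr)]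
  exact measureReal_mul_sq_dist_le f (f x₁) (f x₂) measure_ball_lt_top.ne
    (hsub x₁ (by simp)) (hsub x₂ (by simp)) (hint x₁ x₁) (hint x₂ x₂)

theorem dist_le_of_integral_ball_sq_dist_le {f : E → X} (hf : Continuous f) {C R₀ : ℝ}
    (hC : 0 ≤ C) (hbound : ∀ x R, 0 < R → R ≤ R₀ →
      ∫ y in ball x R, dist (f y) (f x) ^ 2 ∂μ ≤ C * R ^ (Module.finrank ℝ E + 2))
    {x₁ x₂ : E} (hx : dist x₁ x₂ ≤ R₀) :
    dist (f x₁) (f x₂) ≤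
      √(2 ^ (Module.finrank ℝ E + 2) / μ.real (ball (0 : E) 1)) * √C * dist x₁ x₂ := by
  rcases eq_or_ne x₁ x₂ with rfl | h
  · simp
  set r := dist x₁ x₂
  set d := Module.finrank ℝ E
  set V := μ.real (ball (0 : E) 1)
  have hr : 0 < r := dist_pos.2 h
  have hV : 0 < V := measureReal_ball_pos μ 0 one_pos
  have key : (r / 2) ^ d * (V * dist (f x₁) (f x₂) ^ 2) ≤
      (r / 2) ^ d * (2 ^ (d + 2) * C * r ^ 2) := by
    have hscale : (r / 2) ^ d * (2 ^ (d + 2) * C * r ^ 2) = 4 * (C * r ^ (d + 2)) := by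
      rw [div_pow]; field_simp; ring
    linarith [half_dist_pow_mul_sq_dist_le_integral_ball μ hf h, hbound x₁ r hr hx, hbound x₂ r hr hx]
  have hsq : dist (f x₁) (f x₂) ^ 2 ≤ 2 ^ (d + 2) / V * C * r ^ 2 := by
    rw [div_mul_eq_mul_div, div_mul_eq_mul_div, le_div_iff₀ hV]
    linarith [le_of_mul_le_mul_left key (by positivity)]
  calc dist (f x₁) (f x₂) ≤ √(2 ^ (d + 2) / V * C * r ^ 2) :=
        (Real.le_sqrt dist_nonneg (by positivity)).2 hsq
    _ = √(2 ^ (d + 2) / V) * √C * r := by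
        rw [Real.sqrt_mul (by positivity), Real.sqrt_mul (by positivity), Real.sqrt_sq hr.le]

end AddHaar

theorem stmt_5_general (n : ℕ) :
    ∃ c : ℝ, 0 < c ∧
      ∀ (X : Type) [MetricSpace X] (f : EuclideanSpace ℝ (Fin n) → X),
        Continuous f →
        ∀ (C₁ R₀ : ℝ), 0 ≤ C₁ → 0 < R₀ →
        (∀ (x : EuclideanSpace ℝ (Fin n)) (R : ℝ), 0 < R → R ≤ R₀ →
          (∫ y in ball x R, dist (f y) (f x) ^ 2) ≤ C₁ * R ^ (n + 2)) →
        ∀ x₁ x₂ : EuclideanSpace ℝ (Fin n), dist x₁ x₂ ≤ R₀ →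
          dist (f x₁) (f x₂) ≤ c * Real.sqrt C₁ * dist x₁ x₂ := by
  have hV := measureReal_ball_pos volume (0 : EuclideanSpace ℝ (Fin n)) one_pos
  refine ⟨√(2 ^ (n + 2) / volume.real (ball (0 : EuclideanSpace ℝ (Fin n)) 1)),
    Real.sqrt_pos.2 (by positivity), ?_⟩
  intro X _ f hf C₁ R₀ hC₁ _ hbound x₁ x₂ hx
  simpa only [finrank_euclideanSpace_fin] using dist_le_of_integral_ball_sq_dist_le volume hf hC₁
    (by simpa only [finrank_euclideanSpace_fin] using hbound) hx

/-- A Campanato/Morrey-type criterion for Lipschitz continuity: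
if a continuous map `f : ℝⁿ → X` into a metric space satisfies
`∫_{B_R(x)} d(f(y), f(x))² dy ≤ C₁ R^{n+2}` for all `x` and all `0 < R ≤ R₀`,
then `d(f(x₁), f(x₂)) ≤ c(n) √C₁ |x₁ − x₂|` whenever `|x₁ − x₂| ≤ R₀`. -/
theorem stmt_5 (n : ℕ) (hn : 1 ≤ n) :
    ∃ c : ℝ, 0 < c ∧
      ∀ (X : Type) [MetricSpace X] (f : EuclideanSpace ℝ (Fin n) → X),
        Continuous f →
        ∀ (C₁ R₀ : ℝ), 0 ≤ C₁ → 0 < R₀ →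
        (∀ (x : EuclideanSpace ℝ (Fin n)) (R : ℝ), 0 < R → R ≤ R₀ →
          (∫ y in ball x R, dist (f y) (f x) ^ 2) ≤ C₁ * R ^ (n + 2)) →
        ∀ x₁ x₂ : EuclideanSpace ℝ (Fin n), dist x₁ x₂ ≤ R₀ →
          dist (f x₁) (f x₂) ≤ c * Real.sqrt C₁ * dist x₁ x₂ :=
  stmt_5_general n
end

section
/- Let k > 0. There exists a constant c = c(k) > 0 with the following property: for every A ≥ 0 and every bounded nondecreasing function ψ : [1/2, 1] → [0, ∞) satisfying ψ(σ) ≤ A (η − σ)^{−k} ψ(η)^{1/2} for all 1/2 ≤ σ < η ≤ 1, one has ψ(1/2) ≤ c A². -/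
/-!
Weight `ψ` by `w σ = (b - σ) ^ (2k) ψ σ`, which is bounded on `[a, b)` because `ψ` is. Applying the
hypothesis between `σ` and the midpoint `η` of `[σ, b]`, where `η - σ = b - η = (b - σ) / 2`, gives
`w σ ≤ 4 ^ k A √(w η)`. Hence `M = sup w` satisfies `M ≤ 4 ^ k A √M`, so `M ≤ 16 ^ k A²`, and
`ψ a = (b - a) ^ (-2k) w a ≤ (b - a) ^ (-2k) M`.
-/

open Set

namespace IterationLemma

theorem le_sq_of_le_mul_sqrt {x c : ℝ} (h : x ≤ c * √x) : x ≤ c ^ 2 := by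
  rcases lt_or_ge x 0 with hx | hx
  · nlinarith
  have hsq : √x ^ 2 = x := Real.sq_sqrt hx
  nlinarith [Real.sqrt_nonneg x]

variable {ψ : ℝ → ℝ} {a b k A σ : ℝ}

theorem rpow_mul_le_midpoint (hσ : σ < b)
    (h : ψ σ ≤ A * ((σ + b) / 2 - σ) ^ (-k) * √(ψ ((σ + b) / 2))) :
    (b - σ) ^ (2 * k) * ψ σ ≤
      A * 4 ^ k * √((b - (σ + b) / 2) ^ (2 * k) * ψ ((σ + b) / 2)) := by
  set d := (b - σ) / 2
  have hd : 0 < d := by simp only [d]; linarith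
  have hησ : (σ + b) / 2 - σ = d := by ring
  have hbη : b - (σ + b) / 2 = d := by ring
  have hweight : (b - σ) ^ (2 * k) * d ^ (-k) = 4 ^ k * d ^ k := by
    rw [show b - σ = 2 * d by ring, Real.mul_rpow (by norm_num) hd.le, Real.rpow_mul (by norm_num),
      mul_assoc, ← Real.rpow_add hd, show 2 * k + -k = k by ring]
    norm_num
  have hsqrt : √(d ^ (2 * k) * ψ ((σ + b) / 2)) = d ^ k * √(ψ ((σ + b) / 2)) := by
    rw [Real.sqrt_mul (by positivity), mul_comm 2 k, Real.rpow_mul hd.le, Real.rpow_two,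
      Real.sqrt_sq (by positivity)]
  rw [hησ] at h
  rw [hbη, hsqrt]
  calc (b - σ) ^ (2 * k) * ψ σ
      ≤ (b - σ) ^ (2 * k) * (A * d ^ (-k) * √(ψ ((σ + b) / 2))) :=
        mul_le_mul_of_nonneg_left h (by positivity)
    _ = A * ((b - σ) ^ (2 * k) * d ^ (-k)) * √(ψ ((σ + b) / 2)) := by ring
    _ = A * 4 ^ k * (d ^ k * √(ψ ((σ + b) / 2))) := by rw [hweight]; ring

theorem le_mul_sq_of_le_mul_rpow_mul_sqrt (hab : a < b) (hk : 0 ≤ k) (hA : 0 ≤ A)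
    (hψ₀ : ∀ σ ∈ Icc a b, 0 ≤ ψ σ) (hψ : BddAbove (ψ '' Icc a b))
    (h : ∀ σ η : ℝ, a ≤ σ → σ < η → η ≤ b → ψ σ ≤ A * (η - σ) ^ (-k) * √(ψ η)) :
    ψ a ≤ 16 ^ k / (b - a) ^ (2 * k) * A ^ 2 := by
  set w : ℝ → ℝ := fun σ => (b - σ) ^ (2 * k) * ψ σ
  obtain ⟨B, hB⟩ := hψ
  have hw_bdd : BddAbove (w '' Ico a b) := by
    refine ⟨(b - a) ^ (2 * k) * B, forall_mem_image.2 fun σ hσ => ?_⟩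
    exact mul_le_mul
      (Real.rpow_le_rpow (by linarith [hσ.2]) (by linarith [hσ.1]) (by linarith))
      (hB (mem_image_of_mem ψ (Ico_subset_Icc_self hσ))) (hψ₀ σ (Ico_subset_Icc_self hσ))
      (by positivity)
  set M := sSup (w '' Ico a b)
  have ha : a ∈ Ico a b := ⟨le_rfl, hab⟩
  have hw_le : ∀ σ ∈ Ico a b, w σ ≤ M := fun σ hσ => le_csSup hw_bdd (mem_image_of_mem w hσ)
  have hstep : ∀ σ ∈ Ico a b, w σ ≤ A * 4 ^ k * √M := by
    intro σ ⟨haσ, hσb⟩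
    have hη : (σ + b) / 2 ∈ Ico a b := ⟨by linarith, by linarith⟩
    calc w σ ≤ A * 4 ^ k * √(w ((σ + b) / 2)) :=
          rpow_mul_le_midpoint hσb (h _ _ haσ (by linarith) (by linarith))
      _ ≤ A * 4 ^ k * √M := by gcongr; exact hw_le _ hη
  have hM : M ≤ (A * 4 ^ k) ^ 2 :=
    le_sq_of_le_mul_sqrt
      (csSup_le (nonempty_of_mem (mem_image_of_mem w ha)) (forall_mem_image.2 hstep))
  have hpos : 0 < (b - a) ^ (2 * k) := Real.rpow_pos_of_pos (by linarith) _
  have hsixteen : ((4 : ℝ) ^ k) ^ 2 = 16 ^ k := by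
    rw [sq, ← Real.mul_rpow (by norm_num) (by norm_num)]; norm_num
  rw [div_mul_eq_mul_div, le_div_iff₀ hpos, ← hsixteen]
  calc ψ a * (b - a) ^ (2 * k) = w a := mul_comm _ _
    _ ≤ M := hw_le a ha
    _ ≤ (A * 4 ^ k) ^ 2 := hM
    _ = (4 ^ k) ^ 2 * A ^ 2 := by ring

end IterationLemma

open IterationLemma

/-- An iteration lemma: if a bounded nondecreasing nonnegative function `ψ`
on `[1/2, 1]` satisfies `ψ(σ) ≤ A (η−σ)^{−k} ψ(η)^{1/2}` for all `1/2 ≤ σ < η ≤ 1`,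
then `ψ(1/2) ≤ c A²` with `c = c(k)`. -/
theorem stmt_6 (k : ℝ) (hk : 0 < k) :
    ∃ c : ℝ, 0 < c ∧ ∀ A : ℝ, 0 ≤ A → ∀ ψ : ℝ → ℝ,
      MonotoneOn ψ (Icc (1 / 2 : ℝ) 1) →
      (∀ σ ∈ Icc (1 / 2 : ℝ) 1, 0 ≤ ψ σ) →
      BddAbove (ψ '' Icc (1 / 2 : ℝ) 1) →
      (∀ σ η : ℝ, 1 / 2 ≤ σ → σ < η → η ≤ 1 →
        ψ σ ≤ A * (η - σ) ^ (-k) * Real.sqrt (ψ η)) →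
      ψ (1 / 2) ≤ c * A ^ 2 := by
  refine ⟨16 ^ k / (1 / 2) ^ (2 * k), by positivity, ?_⟩
  intro A hA ψ _ hψ₀ hψ h
  have := le_mul_sq_of_le_mul_rpow_mul_sqrt (by norm_num) hk.le hA hψ₀ hψ h
  norm_num at this ⊢
  exact this
end

section
/- Let n, L ≥ 1, ε > 0, Q ∈ ℝ^L, M > 0, 0 ≤ a < b, and let u : ℝⁿ × (a,b) → ℝ^L be smooth with u(x,t) = Q whenever |x| ≥ M. Set F := −ε ∂²_t u + ∂_t u − Δu, and assume the pointwise orthogonality F(x,t) · ∂_t u(x,t) = 0 for all (x,t). Then for all a < t₁ < t₂ < b, ∫_{ℝⁿ} ( |∇u|² − ε |∂_t u|² )(x, t₁) dx − ∫_{ℝⁿ} ( |∇u|² − ε |∂_t u|² )(x, t₂) dx = 2 ∫_{t₁}^{t₂} ∫_{ℝⁿ} |∂_t u(x,t)|² dx dt. -/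
open Set MeasureTheory
open scoped RealInnerProductSpace

/-- Time derivative `∂ₜ u (x,t)`. -/
noncomputable def pt {n : ℕ} {E : Type*} [NormedAddCommGroup E] [NormedSpace ℝ E]
    (u : EuclideanSpace ℝ (Fin n) → ℝ → E) (x : EuclideanSpace ℝ (Fin n)) (t : ℝ) : E :=
  deriv (fun s => u x s) t

/-- Second time derivative `∂²ₜ u (x,t)`. -/
noncomputable def ptt {n : ℕ} {E : Type*} [NormedAddCommGroup E] [NormedSpace ℝ E]
    (u : EuclideanSpace ℝ (Fin n) → ℝ → E) (x : EuclideanSpace ℝ (Fin n)) (t : ℝ) : E :=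
  pt (fun y s => pt u y s) x t

/-- Spatial partial derivative `∂_{xⱼ} u (x,t)`. -/
noncomputable def px {n : ℕ} {E : Type*} [NormedAddCommGroup E] [NormedSpace ℝ E]
    (u : EuclideanSpace ℝ (Fin n) → ℝ → E) (j : Fin n)
    (x : EuclideanSpace ℝ (Fin n)) (t : ℝ) : E :=
  fderiv ℝ (fun y => u y t) x (EuclideanSpace.single j 1)

/-- Spatial Laplacian `Δu (x,t) = Σⱼ ∂²u/∂xⱼ²`, applied componentwise. -/
noncomputable def lapv {n : ℕ} {E : Type*} [NormedAddCommGroup E] [NormedSpace ℝ E]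
    (u : EuclideanSpace ℝ (Fin n) → ℝ → E) (x : EuclideanSpace ℝ (Fin n)) (t : ℝ) : E :=
  ∑ j, px (fun y s => px u j y s) j x t

/-! Differentiating the energy `E(t) = ∫ |∇u|² − ε |∂ₜu|²` in time gives the density
`2 Σⱼ ∂ⱼu · ∂ⱼ∂ₜu − 2ε ∂ₜu · ∂²ₜu`. Since `∇u` and `∂ₜu` vanish for `|x| > M`, integrating by
parts in `x` turns the first sum into `−2 ∫ Δu · ∂ₜu`, while the orthogonality relation
`ε ∂²ₜu · ∂ₜu = |∂ₜu|² − Δu · ∂ₜu` turns the second term into `−2 ∫ |∂ₜu|² + 2 ∫ Δu · ∂ₜu`.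
Hence `E' = −2 ∫ |∂ₜu|²`, and the identity follows by integrating in time, exchanging the
`x`- and `t`-integrals of the continuous, compactly supported density by Fubini. -/

open Function Filter Topology
open scoped ContDiff

theorem hasCompactSupport_of_forall_norm_gt {E β : Type*} [NormedAddCommGroup E] [ProperSpace E]
    [Zero β] {φ : E → β} {M : ℝ} (h : ∀ x, M < ‖x‖ → φ x = 0) : HasCompactSupport φ :=
  HasCompactSupport.intro (isCompact_closedBall 0 M) fun x hx => h x (by simpa using hx)

section Integration

variable {E G : Type*} [NormedAddCommGroup E] [ProperSpace E] [MeasurableSpace E] [BorelSpace E]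
  {μ : Measure E} [IsFiniteMeasureOnCompacts μ] [NormedAddCommGroup G] {M : ℝ} {I : Set ℝ}

theorem integrable_slice_of_continuousOn_uncurry {φ : E → ℝ → G}
    (hφ : ContinuousOn ↿φ (univ ×ˢ I)) (hφM : ∀ x, ∀ t ∈ I, M < ‖x‖ → φ x t = 0) {t : ℝ}
    (ht : t ∈ I) : Integrable (φ · t) μ :=
  (hφ.comp_continuous (continuous_id.prodMk continuous_const) fun x => ⟨mem_univ x, ht⟩
    ).integrable_of_hasCompactSupport
    (hasCompactSupport_of_forall_norm_gt fun x hx => hφM x t ht hx)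

theorem integrable_inner_slice {F : Type*} [NormedAddCommGroup F] [InnerProductSpace ℝ F]
    {φ ψ : E → ℝ → F} (hφ : ContinuousOn ↿φ (univ ×ˢ I)) (hψ : ContinuousOn ↿ψ (univ ×ˢ I))
    (hφM : ∀ x, ∀ t ∈ I, M < ‖x‖ → φ x t = 0) {t : ℝ} (ht : t ∈ I) :
    Integrable (fun x => ⟪φ x t, ψ x t⟫) μ :=
  integrable_slice_of_continuousOn_uncurry (φ := fun x t => ⟪φ x t, ψ x t⟫) (hφ.inner hψ)
    (M := M) (fun x t ht hx => by simp [hφM x t ht hx]) ht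

theorem integrable_uncurry_prod_restrict_Ioo [SFinite μ] {g : E → ℝ → ℝ} {t₁ t₂ : ℝ}
    (hg : ContinuousOn ↿g (univ ×ˢ Icc t₁ t₂))
    (hgM : ∀ x, ∀ s ∈ Icc t₁ t₂, M < ‖x‖ → g x s = 0) :
    Integrable ↿g (μ.prod (volume.restrict (Ioo t₁ t₂))) := by
  rw [← Measure.restrict_univ (μ := μ), Measure.prod_restrict, ← IntegrableOn]
  have hK : IntegrableOn ↿g (Metric.closedBall 0 M ×ˢ Icc t₁ t₂) (μ.prod volume) :=
    (hg.mono (prod_mono (subset_univ _) subset_rfl)).integrableOn_compact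
      ((isCompact_closedBall 0 M).prod isCompact_Icc)
  refine hK.of_forall_sdiff_eq_zero (MeasurableSet.univ.prod measurableSet_Ioo) ?_
  rintro ⟨x, s⟩ ⟨⟨-, hs⟩, hxs⟩
  have hs' : s ∈ Icc t₁ t₂ := Ioo_subset_Icc_self hs
  exact hgM x s hs' (by simpa [hs'] using hxs)

theorem integral_sub_integral_eq_setIntegral_integral [SFinite μ] {e g : E → ℝ → ℝ}
    {t₁ t₂ : ℝ} (h12 : t₁ ≤ t₂) (he : ∀ x, ∀ s ∈ Icc t₁ t₂, HasDerivAt (e x) (g x s) s)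
    (hg : ContinuousOn ↿g (univ ×ˢ Icc t₁ t₂))
    (hgM : ∀ x, ∀ s ∈ Icc t₁ t₂, M < ‖x‖ → g x s = 0)
    (he₁ : Integrable (e · t₁) μ) (he₂ : Integrable (e · t₂) μ) :
    ∫ x, e x t₂ ∂μ - ∫ x, e x t₁ ∂μ = ∫ s in Ioo t₁ t₂, ∫ x, g x s ∂μ := by
  have hftc : ∀ x, e x t₂ - e x t₁ = ∫ s in Ioo t₁ t₂, g x s := fun x => by
    have hcont : ContinuousOn (g x) (Icc t₁ t₂) :=
      hg.comp (continuous_const.prodMk continuous_id).continuousOn fun _ hs => ⟨mem_univ x, hs⟩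
    rw [← integral_Ioc_eq_integral_Ioo, ← intervalIntegral.integral_of_le h12,
      intervalIntegral.integral_eq_sub_of_hasDerivAt
        (fun s hs => he x s (by rwa [uIcc_of_le h12] at hs)) (hcont.intervalIntegrable_of_Icc h12)]
  rw [← integral_sub he₂ he₁, integral_congr_ae (Eventually.of_forall hftc),
    integral_integral_swap (integrable_uncurry_prod_restrict_Ioo hg hgM)]

end Integration

section PartialDerivatives

variable {n : ℕ} {F : Type*} [NormedAddCommGroup F] [NormedSpace ℝ F]
  {f : EuclideanSpace ℝ (Fin n) → ℝ → F} {x : EuclideanSpace ℝ (Fin n)} {t : ℝ} {I : Set ℝ}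

theorem hasDerivAt_of_differentiableAt_uncurry (h : DifferentiableAt ℝ ↿f (x, t)) :
    HasDerivAt (f x) (fderiv ℝ ↿f (x, t) (0, 1)) t :=
  h.hasFDerivAt.comp_hasDerivAt t ((hasDerivAt_const t x).prodMk (hasDerivAt_id t))

theorem pt_eq_fderiv_uncurry (h : DifferentiableAt ℝ ↿f (x, t)) :
    pt f x t = fderiv ℝ ↿f (x, t) (0, 1) :=
  (hasDerivAt_of_differentiableAt_uncurry h).deriv

theorem hasDerivAt_pt (h : DifferentiableAt ℝ ↿f (x, t)) : HasDerivAt (f x) (pt f x t) t := by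
  rw [pt_eq_fderiv_uncurry h]
  exact hasDerivAt_of_differentiableAt_uncurry h

theorem px_eq_fderiv_uncurry (h : DifferentiableAt ℝ ↿f (x, t)) (j : Fin n) :
    px f j x t = fderiv ℝ ↿f (x, t) (EuclideanSpace.single j 1, 0) := by
  change fderiv ℝ (↿f ∘ fun y => (y, t)) x _ = _
  rw [(h.hasFDerivAt.comp x (hasFDerivAt_prodMk_left x t)).fderiv]
  rfl

theorem differentiableAt_uncurry_of_contDiffOn (hI : IsOpen I)
    (hf : ContDiffOn ℝ ∞ ↿f (univ ×ˢ I)) (ht : t ∈ I) : DifferentiableAt ℝ ↿f (x, t) :=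
  (hf.differentiableOn (by simp)).differentiableAt
    ((isOpen_univ.prod hI).mem_nhds ⟨mem_univ x, ht⟩)

theorem differentiable_slice_of_contDiffOn (hI : IsOpen I) (hf : ContDiffOn ℝ ∞ ↿f (univ ×ˢ I))
    (ht : t ∈ I) : Differentiable ℝ (f · t) := fun x =>
  (differentiableAt_uncurry_of_contDiffOn hI hf ht).comp (𝕜 := ℝ) (g := ↿f) x
    (differentiableAt_id.prodMk (differentiableAt_const t))

theorem eqOn_uncurry_pt (hI : IsOpen I) (hf : ContDiffOn ℝ ∞ ↿f (univ ×ˢ I)) :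
    EqOn ↿(pt f) (fun p => fderiv ℝ ↿f p (0, 1)) (univ ×ˢ I) := fun _ hp =>
  pt_eq_fderiv_uncurry (differentiableAt_uncurry_of_contDiffOn hI hf hp.2)

theorem eqOn_uncurry_px (hI : IsOpen I) (hf : ContDiffOn ℝ ∞ ↿f (univ ×ˢ I)) (j : Fin n) :
    EqOn ↿(px f j) (fun p => fderiv ℝ ↿f p (EuclideanSpace.single j 1, 0)) (univ ×ˢ I) :=
  fun _ hp => px_eq_fderiv_uncurry (differentiableAt_uncurry_of_contDiffOn hI hf hp.2) j

theorem contDiffOn_fderiv_apply_uncurry (hI : IsOpen I) (hf : ContDiffOn ℝ ∞ ↿f (univ ×ˢ I))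
    (v : EuclideanSpace ℝ (Fin n) × ℝ) :
    ContDiffOn ℝ ∞ (fun p => fderiv ℝ ↿f p v) (univ ×ˢ I) :=
  (hf.fderiv_of_isOpen (isOpen_univ.prod hI) le_rfl).clm_apply contDiffOn_const

theorem contDiffOn_uncurry_pt (hI : IsOpen I) (hf : ContDiffOn ℝ ∞ ↿f (univ ×ˢ I)) :
    ContDiffOn ℝ ∞ ↿(pt f) (univ ×ˢ I) :=
  (contDiffOn_fderiv_apply_uncurry hI hf _).congr (eqOn_uncurry_pt hI hf)

theorem contDiffOn_uncurry_px (hI : IsOpen I) (hf : ContDiffOn ℝ ∞ ↿f (univ ×ˢ I)) (j : Fin n) :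
    ContDiffOn ℝ ∞ ↿(px f j) (univ ×ˢ I) :=
  (contDiffOn_fderiv_apply_uncurry hI hf _).congr (eqOn_uncurry_px hI hf j)

theorem fderiv_fderiv_apply_uncurry (hI : IsOpen I)
    (hf : ContDiffOn ℝ ∞ ↿f (univ ×ˢ I)) (ht : t ∈ I) (v w : EuclideanSpace ℝ (Fin n) × ℝ) :
    fderiv ℝ (fun p => fderiv ℝ ↿f p w) (x, t) v = fderiv ℝ (fderiv ℝ ↿f) (x, t) v w := by
  have hd : DifferentiableAt ℝ (fderiv ℝ ↿f) (x, t) :=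
    ((hf.contDiffAt ((isOpen_univ.prod hI).mem_nhds ⟨mem_univ x, ht⟩)).fderiv_right
      (m := 1) (WithTop.coe_le_coe.2 le_top)).differentiableAt one_ne_zero
  rw [fderiv_clm_apply hd (differentiableAt_const w)]
  simp

theorem pt_px_eq_px_pt (hI : IsOpen I) (hf : ContDiffOn ℝ ∞ ↿f (univ ×ˢ I)) (ht : t ∈ I)
    (j : Fin n) : pt (px f j) x t = px (pt f) j x t := by
  have hΩ : univ ×ˢ I ∈ 𝓝 (x, t) := (isOpen_univ.prod hI).mem_nhds ⟨mem_univ x, ht⟩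
  rw [pt_eq_fderiv_uncurry
      (differentiableAt_uncurry_of_contDiffOn hI (contDiffOn_uncurry_px hI hf j) ht),
    px_eq_fderiv_uncurry
      (differentiableAt_uncurry_of_contDiffOn hI (contDiffOn_uncurry_pt hI hf) ht),
    ((eqOn_uncurry_px hI hf j).eventuallyEq_of_mem hΩ).fderiv_eq,
    ((eqOn_uncurry_pt hI hf).eventuallyEq_of_mem hΩ).fderiv_eq,
    fderiv_fderiv_apply_uncurry hI hf ht, fderiv_fderiv_apply_uncurry hI hf ht]
  exact ((hf.contDiffAt hΩ).isSymmSndFDerivAt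
    (by simpa using WithTop.coe_le_coe.2 (le_top : (2 : ℕ∞) ≤ ⊤))) _ _

end PartialDerivatives

section Vanishing

variable {n : ℕ} {F : Type*} [NormedAddCommGroup F] [NormedSpace ℝ F]
  {f : EuclideanSpace ℝ (Fin n) → ℝ → F} {x : EuclideanSpace ℝ (Fin n)} {t M : ℝ} {I : Set ℝ}
  {Q : F}

theorem pt_eq_zero_of_eq_const (hI : IsOpen I) (hfQ : ∀ x, ∀ t ∈ I, M < ‖x‖ → f x t = Q)
    (ht : t ∈ I) (hx : M < ‖x‖) : pt f x t = 0 := by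
  have hconst : f x =ᶠ[𝓝 t] fun _ => Q :=
    eventually_of_mem (hI.mem_nhds ht) fun s hs => hfQ x s hs hx
  exact hconst.deriv_eq.trans (deriv_const t Q)

theorem px_eq_zero_of_eq_const (hfQ : ∀ x, ∀ t ∈ I, M < ‖x‖ → f x t = Q)
    (ht : t ∈ I) (hx : M < ‖x‖) (j : Fin n) : px f j x t = 0 := by
  have hconst : (f · t) =ᶠ[𝓝 x] fun _ => Q :=
    eventually_of_mem ((isOpen_lt continuous_const continuous_norm).mem_nhds hx)
      fun y hy => hfQ y t ht hy
  rw [px, hconst.fderiv_eq, fderiv_const_apply]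
  rfl

end Vanishing

theorem integral_inner_px_eq_neg {n : ℕ} {F : Type*} [NormedAddCommGroup F]
    [InnerProductSpace ℝ F] {f g : EuclideanSpace ℝ (Fin n) → ℝ → F} {I : Set ℝ} {M t : ℝ}
    (hI : IsOpen I) (hf : ContDiffOn ℝ ∞ ↿f (univ ×ˢ I)) (hg : ContDiffOn ℝ ∞ ↿g (univ ×ˢ I))
    (hfM : ∀ x, ∀ t ∈ I, M < ‖x‖ → f x t = 0) (ht : t ∈ I) (j : Fin n) :
    ∫ x, ⟪f x t, px g j x t⟫ = -∫ x, ⟪px f j x t, g x t⟫ :=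
  integral_bilinear_fderiv_right_eq_neg_left_of_integrable (B := innerSL ℝ)
    (integrable_inner_slice (contDiffOn_uncurry_px hI hf j).continuousOn hg.continuousOn
      (fun _ _ ht hx => px_eq_zero_of_eq_const hfM ht hx j) ht)
    (integrable_inner_slice hf.continuousOn (contDiffOn_uncurry_px hI hg j).continuousOn hfM ht)
    (integrable_inner_slice hf.continuousOn hg.continuousOn hfM ht)
    (fun x _ => differentiable_slice_of_contDiffOn hI hf ht x)
    (fun x _ => differentiable_slice_of_contDiffOn hI hg ht x)

section Energy

variable {n : ℕ} {F : Type*} [NormedAddCommGroup F] [InnerProductSpace ℝ F]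
  {u : EuclideanSpace ℝ (Fin n) → ℝ → F} {I : Set ℝ} {M t : ℝ} {Q : F}

noncomputable def energyDensity (ε : ℝ) (u : EuclideanSpace ℝ (Fin n) → ℝ → F)
    (x : EuclideanSpace ℝ (Fin n)) (t : ℝ) : ℝ :=
  (∑ j, ‖px u j x t‖ ^ 2) - ε * ‖pt u x t‖ ^ 2

noncomputable def energyDensityDeriv (ε : ℝ) (u : EuclideanSpace ℝ (Fin n) → ℝ → F)
    (x : EuclideanSpace ℝ (Fin n)) (t : ℝ) : ℝ :=
  2 * (∑ j, ⟪px u j x t, px (pt u) j x t⟫) - ε * (2 * ⟪pt u x t, ptt u x t⟫)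

theorem hasDerivAt_energyDensity (hI : IsOpen I) (hu : ContDiffOn ℝ ∞ ↿u (univ ×ˢ I))
    (ht : t ∈ I) (ε : ℝ) (x : EuclideanSpace ℝ (Fin n)) :
    HasDerivAt (energyDensity ε u x) (energyDensityDeriv ε u x t) t := by
  have hpx : ∀ j, HasDerivAt (fun s => ‖px u j x s‖ ^ 2) (2 * ⟪px u j x t, px (pt u) j x t⟫) t :=
    fun j => by
      rw [← pt_px_eq_px_pt hI hu ht]
      exact (hasDerivAt_pt
        (differentiableAt_uncurry_of_contDiffOn hI (contDiffOn_uncurry_px hI hu j) ht)).norm_sq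
  have hpt : HasDerivAt (fun s => ‖pt u x s‖ ^ 2) (2 * ⟪pt u x t, ptt u x t⟫) t :=
    (hasDerivAt_pt
      (differentiableAt_uncurry_of_contDiffOn hI (contDiffOn_uncurry_pt hI hu) ht)).norm_sq
  rw [energyDensityDeriv, Finset.mul_sum]
  exact (HasDerivAt.fun_sum fun j _ => hpx j).sub (hpt.const_mul ε)

theorem continuousOn_energyDensity (hI : IsOpen I) (hu : ContDiffOn ℝ ∞ ↿u (univ ×ˢ I))
    (ε : ℝ) : ContinuousOn ↿(energyDensity ε u) (univ ×ˢ I) :=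
  (continuousOn_finsetSum _ fun j _ =>
      ((contDiffOn_uncurry_px hI hu j).continuousOn.norm).pow 2).sub
    (continuousOn_const.mul ((contDiffOn_uncurry_pt hI hu).continuousOn.norm.pow 2))

theorem continuousOn_energyDensityDeriv (hI : IsOpen I)
    (hu : ContDiffOn ℝ ∞ ↿u (univ ×ˢ I)) (ε : ℝ) :
    ContinuousOn ↿(energyDensityDeriv ε u) (univ ×ˢ I) :=
  (continuousOn_const.mul (continuousOn_finsetSum _ fun j _ =>
      (contDiffOn_uncurry_px hI hu j).continuousOn.inner
        (contDiffOn_uncurry_px hI (contDiffOn_uncurry_pt hI hu) j).continuousOn)).sub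
    (continuousOn_const.mul (continuousOn_const.mul
      ((contDiffOn_uncurry_pt hI hu).continuousOn.inner
        (contDiffOn_uncurry_pt hI (contDiffOn_uncurry_pt hI hu)).continuousOn)))

theorem energyDensity_eq_zero_of_eq_const (hI : IsOpen I)
    (huQ : ∀ x, ∀ t ∈ I, M < ‖x‖ → u x t = Q) (ε : ℝ) {x : EuclideanSpace ℝ (Fin n)}
    (ht : t ∈ I) (hx : M < ‖x‖) : energyDensity ε u x t = 0 := by
  simp [energyDensity, px_eq_zero_of_eq_const huQ ht hx, pt_eq_zero_of_eq_const hI huQ ht hx]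

theorem energyDensityDeriv_eq_zero_of_eq_const (hI : IsOpen I)
    (huQ : ∀ x, ∀ t ∈ I, M < ‖x‖ → u x t = Q) (ε : ℝ) {x : EuclideanSpace ℝ (Fin n)}
    (ht : t ∈ I) (hx : M < ‖x‖) : energyDensityDeriv ε u x t = 0 := by
  simp [energyDensityDeriv, px_eq_zero_of_eq_const huQ ht hx, pt_eq_zero_of_eq_const hI huQ ht hx]

theorem integrable_energyDensity (hI : IsOpen I) (hu : ContDiffOn ℝ ∞ ↿u (univ ×ˢ I))
    (huQ : ∀ x, ∀ t ∈ I, M < ‖x‖ → u x t = Q) (ε : ℝ) (ht : t ∈ I) :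
    Integrable (energyDensity ε u · t) :=
  integrable_slice_of_continuousOn_uncurry (continuousOn_energyDensity hI hu ε)
    (fun _ _ ht hx => energyDensity_eq_zero_of_eq_const hI huQ ε ht hx) ht

theorem energyDensityDeriv_eq_of_inner_eq_zero {ε : ℝ} {x : EuclideanSpace ℝ (Fin n)}
    (horth : ⟪(-ε) • ptt u x t + pt u x t - lapv u x t, pt u x t⟫ = 0) :
    energyDensityDeriv ε u x t =
      2 * (∑ j, (⟪px u j x t, px (pt u) j x t⟫ + ⟪px (px u j) j x t, pt u x t⟫))
        - 2 * ‖pt u x t‖ ^ 2 := by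
  rw [lapv, inner_sub_left, inner_add_left, real_inner_smul_left, sum_inner,
    real_inner_self_eq_norm_sq, real_inner_comm] at horth
  rw [energyDensityDeriv, Finset.sum_add_distrib]
  linear_combination 2 * horth

theorem integral_energyDensityDeriv (hI : IsOpen I) (hu : ContDiffOn ℝ ∞ ↿u (univ ×ˢ I))
    (huQ : ∀ x, ∀ t ∈ I, M < ‖x‖ → u x t = Q) {ε : ℝ}
    (horth : ∀ x, ⟪(-ε) • ptt u x t + pt u x t - lapv u x t, pt u x t⟫ = 0) (ht : t ∈ I) :
    ∫ x, energyDensityDeriv ε u x t = -2 * ∫ x, ‖pt u x t‖ ^ 2 := by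
  have hpxM : ∀ j, ∀ x, ∀ t ∈ I, M < ‖x‖ → px u j x t = 0 := fun j _ _ ht hx =>
    px_eq_zero_of_eq_const huQ ht hx j
  have hA : ∀ j, Integrable (fun x => ⟪px u j x t, px (pt u) j x t⟫) := fun j =>
    integrable_inner_slice (contDiffOn_uncurry_px hI hu j).continuousOn
      (contDiffOn_uncurry_px hI (contDiffOn_uncurry_pt hI hu) j).continuousOn (hpxM j) ht
  have hC : ∀ j, Integrable (fun x => ⟪px (px u j) j x t, pt u x t⟫) := fun j =>
    integrable_inner_slice (contDiffOn_uncurry_px hI (contDiffOn_uncurry_px hI hu j) j).continuousOn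
      (contDiffOn_uncurry_pt hI hu).continuousOn
      (fun _ _ ht hx => px_eq_zero_of_eq_const (hpxM j) ht hx j) ht
  have hN : Integrable (fun x => ‖pt u x t‖ ^ 2) :=
    integrable_slice_of_continuousOn_uncurry (φ := fun x t => ‖pt u x t‖ ^ 2)
      ((contDiffOn_uncurry_pt hI hu).continuousOn.norm.pow 2) (M := M)
      (fun x t ht hx => by simp [pt_eq_zero_of_eq_const hI huQ ht hx]) ht
  have hAC : ∀ j, Integrable
      (fun x => ⟪px u j x t, px (pt u) j x t⟫ + ⟪px (px u j) j x t, pt u x t⟫) :=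
    fun j => (hA j).add (hC j)
  have hIBP :
      ∀ j, (∫ x, ⟪px u j x t, px (pt u) j x t⟫) + ∫ x, ⟪px (px u j) j x t, pt u x t⟫ = 0 :=
    fun j => by
      rw [integral_inner_px_eq_neg hI (contDiffOn_uncurry_px hI hu j)
        (contDiffOn_uncurry_pt hI hu) (hpxM j) ht j, neg_add_cancel]
  calc ∫ x, energyDensityDeriv ε u x t
      = ∫ x, (2 * (∑ j, (⟪px u j x t, px (pt u) j x t⟫ + ⟪px (px u j) j x t, pt u x t⟫))
          - 2 * ‖pt u x t‖ ^ 2) :=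
        integral_congr_ae (Eventually.of_forall fun x => energyDensityDeriv_eq_of_inner_eq_zero
          (horth x))
    _ = 2 * (∑ j, ((∫ x, ⟪px u j x t, px (pt u) j x t⟫) + ∫ x, ⟪px (px u j) j x t, pt u x t⟫))
          - 2 * ∫ x, ‖pt u x t‖ ^ 2 := by
        rw [integral_sub ((integrable_finsetSum _ fun j _ => hAC j).const_mul 2)
            (hN.const_mul 2), integral_const_mul, integral_const_mul,
          integral_finsetSum _ fun j _ => hAC j]
        simp_rw [integral_add (hA _) (hC _)]
    _ = -2 * ∫ x, ‖pt u x t‖ ^ 2 := by simp [hIBP]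

end Energy

theorem stmt_10_general (n L : ℕ) (ε : ℝ)
    (Q : EuclideanSpace ℝ (Fin L)) (M : ℝ)
    (a b : ℝ)
    (u : EuclideanSpace ℝ (Fin n) → ℝ → EuclideanSpace ℝ (Fin L))
    (hu : ContDiffOn ℝ (⊤ : ℕ∞)
      (fun p : EuclideanSpace ℝ (Fin n) × ℝ => u p.1 p.2) (univ ×ˢ Ioo a b))
    (hQ : ∀ x : EuclideanSpace ℝ (Fin n), ∀ t ∈ Ioo a b, M ≤ ‖x‖ → u x t = Q)
    (horth : ∀ x : EuclideanSpace ℝ (Fin n), ∀ t ∈ Ioo a b,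
      ⟪(-ε) • ptt u x t + pt u x t - lapv u x t, pt u x t⟫ = 0) :
    ∀ t₁ t₂ : ℝ, a < t₁ → t₁ < t₂ → t₂ < b →
      ((∫ x : EuclideanSpace ℝ (Fin n),
          ((∑ j, ‖px u j x t₁‖ ^ 2) - ε * ‖pt u x t₁‖ ^ 2))
        - ∫ x : EuclideanSpace ℝ (Fin n),
            ((∑ j, ‖px u j x t₂‖ ^ 2) - ε * ‖pt u x t₂‖ ^ 2))
      = 2 * ∫ t in Ioo t₁ t₂, ∫ x : EuclideanSpace ℝ (Fin n), ‖pt u x t‖ ^ 2 := by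
  intro t₁ t₂ ht₁ h12 ht₂
  have hI : Icc t₁ t₂ ⊆ Ioo a b := Icc_subset_Ioo ht₁ ht₂
  have huQ : ∀ x, ∀ t ∈ Ioo a b, M < ‖x‖ → u x t = Q := fun x t ht hx => hQ x t ht hx.le
  have hE := integral_sub_integral_eq_setIntegral_integral (μ := volume) h12.le
    (fun x s hs => hasDerivAt_energyDensity isOpen_Ioo hu (hI hs) ε x)
    ((continuousOn_energyDensityDeriv isOpen_Ioo hu ε).mono (prod_mono subset_rfl hI))
    (fun x s hs hx => energyDensityDeriv_eq_zero_of_eq_const isOpen_Ioo huQ ε (hI hs) hx)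
    (integrable_energyDensity isOpen_Ioo hu huQ ε (hI ⟨le_rfl, h12.le⟩))
    (integrable_energyDensity isOpen_Ioo hu huQ ε (hI ⟨h12.le, le_rfl⟩))
  rw [setIntegral_congr_fun measurableSet_Ioo fun s hs => integral_energyDensityDeriv isOpen_Ioo
    hu huQ (fun x => horth x s (hI (Ioo_subset_Icc_self hs))) (hI (Ioo_subset_Icc_self hs)),
    integral_const_mul] at hE
  change (∫ x, energyDensity ε u x t₁) - ∫ x, energyDensity ε u x t₂ = _
  linarith

/-- Energy identity for the elliptic regularization. If
`F = −ε ∂²ₜ u + ∂ₜ u − Δu` is pointwise orthogonal to `∂ₜ u`, and `u ≡ Q` for `|x| ≥ M`,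
then for all `a < t₁ < t₂ < b`,
`∫ (|∇u|² − ε|∂ₜu|²)(·,t₁) − ∫ (|∇u|² − ε|∂ₜu|²)(·,t₂) = 2 ∫_{t₁}^{t₂} ∫ |∂ₜu|²`. -/
theorem stmt_10 (n L : ℕ) (hn : 1 ≤ n) (hL : 1 ≤ L) (ε : ℝ) (hε : 0 < ε)
    (Q : EuclideanSpace ℝ (Fin L)) (M : ℝ) (hM : 0 < M)
    (a b : ℝ) (ha : 0 ≤ a) (hab : a < b)
    (u : EuclideanSpace ℝ (Fin n) → ℝ → EuclideanSpace ℝ (Fin L))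
    (hu : ContDiffOn ℝ (⊤ : ℕ∞)
      (fun p : EuclideanSpace ℝ (Fin n) × ℝ => u p.1 p.2) (univ ×ˢ Ioo a b))
    (hQ : ∀ x : EuclideanSpace ℝ (Fin n), ∀ t ∈ Ioo a b, M ≤ ‖x‖ → u x t = Q)
    (horth : ∀ x : EuclideanSpace ℝ (Fin n), ∀ t ∈ Ioo a b,
      ⟪(-ε) • ptt u x t + pt u x t - lapv u x t, pt u x t⟫ = 0) :
    ∀ t₁ t₂ : ℝ, a < t₁ → t₁ < t₂ → t₂ < b →
      ((∫ x : EuclideanSpace ℝ (Fin n),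
          ((∑ j, ‖px u j x t₁‖ ^ 2) - ε * ‖pt u x t₁‖ ^ 2))
        - ∫ x : EuclideanSpace ℝ (Fin n),
            ((∑ j, ‖px u j x t₂‖ ^ 2) - ε * ‖pt u x t₂‖ ^ 2))
      = 2 * ∫ t in Ioo t₁ t₂, ∫ x : EuclideanSpace ℝ (Fin n), ‖pt u x t‖ ^ 2 :=
  stmt_10_general n L ε Q M a b u hu hQ horth
end

section
/- Let n, L ≥ 1, ε > 0, and let u : ℝⁿ × ℝ → ℝ^L be smooth. Define the energy density e_ε(u) = (ε/2)|∂_t u|² + (1/2)|∇u|², and set F := −ε ∂²_t u − Δu + ∂_t u. Then at every point of ℝⁿ × ℝ one has the Bochner-type identity −ε ∂²_t e_ε(u) − Δ e_ε(u) + ∂_t e_ε(u) = Σ_{j=1}^n ∂_{x_j} F · ∂_{x_j} u + ε ∂_t F · ∂_t u − ( ε² |∂²_t u|² + 2ε Σ_{j=1}^n |∂_t ∂_{x_j} u|² + Σ_{j,k=1}^n |∂_{x_j} ∂_{x_k} u|² ). In particular, if F ≡ 0 on ℝⁿ × ℝ, then −ε ∂²_t e_ε(u) − Δ e_ε(u)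 + ∂_t e_ε(u) ≤ 0. -/
/-!
Write `p = (x, t)` and let `∂ᵥ` be the derivative along `v ∈ ℝⁿ × ℝ`. Both the operator
`P = ∂_{v₀} - Σᵢ cᵢ ∂²_{vᵢ}` and the energy `e = Σᵢ cᵢ ‖∂_{vᵢ} u‖² / 2` are built from
directional derivatives with constant coefficients. By symmetry of second derivatives `P`
commutes with every `∂ᵥ`, and the product rule gives
`P (‖f‖² / 2) = ⟪P f, f⟫ - Σₖ cₖ ‖∂_{vₖ} f‖²`. Applying this to `f = ∂_{vᵢ} u` and summing
gives `P e = Σᵢ cᵢ ⟪∂_{vᵢ} (P u), ∂_{vᵢ} u⟫ - Σᵢₖ cᵢ cₖ ‖∂_{vᵢ} ∂_{vₖ} u‖²`, which is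
`≤ 0` when `P u = 0` and all `cᵢ ≥ 0`.
-/

open scoped RealInnerProductSpace

open scoped ContDiff

section DirDeriv

variable {H V : Type*} [NormedAddCommGroup H] [NormedSpace ℝ H]
  [NormedAddCommGroup V] [NormedSpace ℝ V]

noncomputable def dirDeriv (v : H) (g : H → V) : H → V := fun p => fderiv ℝ g p v

theorem ContDiff.dirDeriv {g : H → V} (hg : ContDiff ℝ ∞ g) (v : H) :
    ContDiff ℝ ∞ (dirDeriv v g) :=
  (hg.fderiv_right (by exact_mod_cast le_rfl)).clm_apply contDiff_const

theorem dirDeriv_comm {g : H → V} (hg : ContDiff ℝ 2 g) (a b : H) :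
    dirDeriv a (dirDeriv b g) = dirDeriv b (dirDeriv a g) := by
  funext p
  have hg' : DifferentiableAt ℝ (fderiv ℝ g) p :=
    ((hg.fderiv_right (m := 1) le_rfl).differentiable one_ne_zero) p
  have hsnd : ∀ a b, dirDeriv a (dirDeriv b g) p = fderiv ℝ (fderiv ℝ g) p a b := fun a b => by
    change fderiv ℝ (fun q => fderiv ℝ g q b) p a = _
    simp [fderiv_clm_apply hg' (differentiableAt_const b)]
  rw [hsnd, hsnd]
  exact hg.contDiffAt.isSymmSndFDerivAt (by simp) a b

theorem dirDeriv_fun_sub {f g : H → V} (hf : Differentiable ℝ f) (hg : Differentiable ℝ g)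
    (v : H) : dirDeriv v (fun p => f p - g p) = fun p => dirDeriv v f p - dirDeriv v g p := by
  funext p
  simp [dirDeriv, fderiv_fun_sub (hf p) (hg p)]

theorem dirDeriv_fun_sum_smul {ι : Type*} {s : Finset ι} {g : ι → H → V}
    (hg : ∀ i ∈ s, Differentiable ℝ (g i)) (a : ι → ℝ) (v : H) :
    dirDeriv v (fun p => ∑ i ∈ s, a i • g i p) = fun p => ∑ i ∈ s, a i • dirDeriv v (g i) p := by
  funext p
  rw [dirDeriv, fderiv_fun_sum (A := fun i p => a i • g i p) fun i hi =>
    ((hg i hi).const_smul (a i)) p]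
  rw [FunLike.coe_sum, Finset.sum_apply]
  exact Finset.sum_congr rfl fun i hi => by simp [fderiv_fun_const_smul ((hg i hi) p), dirDeriv]

end DirDeriv

section DirOp

variable {H V : Type*} [NormedAddCommGroup H] [NormedSpace ℝ H]
  [NormedAddCommGroup V] [NormedSpace ℝ V] {ι : Type*} [Fintype ι]

noncomputable def dirOp (c : ι → ℝ) (v : ι → H) (v₀ : H) (g : H → V) : H → V :=
  fun p => dirDeriv v₀ g p - ∑ i, c i • dirDeriv (v i) (dirDeriv (v i) g) p

variable (c : ι → ℝ) (v : ι → H) (v₀ : H)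

theorem ContDiff.dirOp {g : H → V} (hg : ContDiff ℝ ∞ g) : ContDiff ℝ ∞ (dirOp c v v₀ g) :=
  (hg.dirDeriv v₀).sub <| ContDiff.sum fun i _ =>
    (((hg.dirDeriv (v i)).dirDeriv (v i))).const_smul (c i)

theorem dirDeriv_dirOp {g : H → V} (hg : ContDiff ℝ ∞ g) (a : H) :
    dirDeriv a (dirOp c v v₀ g) = dirOp c v v₀ (dirDeriv a g) := by
  have hg2 : ∀ {f : H → V}, ContDiff ℝ ∞ f → ContDiff ℝ 2 f :=
    fun hf => hf.of_le (WithTop.coe_le_coe.2 le_top)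
  have hdiff : ∀ {f : H → V}, ContDiff ℝ ∞ f → Differentiable ℝ f :=
    fun hf => hf.differentiable (by simp)
  unfold dirOp
  rw [dirDeriv_fun_sub (hdiff (hg.dirDeriv v₀))
      (hdiff (ContDiff.sum fun i _ => ((hg.dirDeriv (v i)).dirDeriv (v i)).const_smul (c i))),
    dirDeriv_fun_sum_smul (fun i _ => hdiff ((hg.dirDeriv (v i)).dirDeriv (v i)))]
  funext p
  congr 1
  · rw [dirDeriv_comm (hg2 hg)]
  · refine Finset.sum_congr rfl fun i _ => ?_
    rw [dirDeriv_comm (hg2 (hg.dirDeriv (v i))), dirDeriv_comm (hg2 hg) a (v i)]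

theorem dirOp_fun_sum_smul {κ : Type*} {s : Finset κ} {g : κ → H → V}
    (hg : ∀ k ∈ s, ContDiff ℝ ∞ (g k)) (a : κ → ℝ) :
    dirOp c v v₀ (fun p => ∑ k ∈ s, a k • g k p)
      = fun p => ∑ k ∈ s, a k • dirOp c v v₀ (g k) p := by
  have hdiff : ∀ {f : H → V}, ContDiff ℝ ∞ f → Differentiable ℝ f :=
    fun hf => hf.differentiable (by simp)
  funext p
  simp only [dirOp, dirDeriv_fun_sum_smul (fun k hk => hdiff (hg k hk)),
    dirDeriv_fun_sum_smul (fun k hk => hdiff ((hg k hk).dirDeriv _)), Finset.smul_sum, smul_sub,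
    Finset.sum_sub_distrib]
  rw [Finset.sum_comm]
  simp only [smul_comm (c _) (a _)]

noncomputable def dirEnergy (g : H → V) : H → ℝ :=
  fun p => ∑ i, c i * (‖dirDeriv (v i) g p‖ ^ 2 / 2)

end DirOp

section Energy

variable {H V : Type*} [NormedAddCommGroup H] [NormedSpace ℝ H]
  [NormedAddCommGroup V] [InnerProductSpace ℝ V] {ι : Type*} [Fintype ι]

theorem dirDeriv_fun_inner {f g : H → V} (hf : Differentiable ℝ f) (hg : Differentiable ℝ g)
    (v : H) :
    dirDeriv v (fun p => ⟪f p, g p⟫) = fun p => ⟪dirDeriv v f p, g p⟫ + ⟪f p, dirDeriv v g p⟫ := by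
  funext p
  rw [dirDeriv, fderiv_inner_apply ℝ (hf p) (hg p), add_comm]
  rfl

theorem dirDeriv_half_norm_sq {f : H → V} (hf : Differentiable ℝ f) (v : H) :
    dirDeriv v (fun p => ‖f p‖ ^ 2 / 2) = fun p => ⟪dirDeriv v f p, f p⟫ := by
  funext p
  have hD := ((hf p).hasFDerivAt.norm_sq.mul_const (2⁻¹ : ℝ)).fderiv
  simp only [← div_eq_mul_inv] at hD
  simp [dirDeriv, hD, real_inner_comm]

variable (c : ι → ℝ) (v : ι → H) (v₀ : H)

theorem dirOp_half_norm_sq {f : H → V} (hf : ContDiff ℝ ∞ f) (p : H) :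
    dirOp c v v₀ (fun p => ‖f p‖ ^ 2 / 2) p
      = ⟪dirOp c v v₀ f p, f p⟫ - ∑ i, c i * ‖dirDeriv (v i) f p‖ ^ 2 := by
  have hdiff : ∀ {f : H → V}, ContDiff ℝ ∞ f → Differentiable ℝ f :=
    fun hf => hf.differentiable (by simp)
  simp only [dirOp, dirDeriv_half_norm_sq (hdiff hf),
    dirDeriv_fun_inner (hdiff (hf.dirDeriv _)) (hdiff hf), inner_sub_left, sum_inner,
    real_inner_smul_left, real_inner_self_eq_norm_sq]
  simp only [smul_eq_mul, mul_add, Finset.sum_add_distrib]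
  ring

theorem ContDiff.dirEnergy {g : H → V} (hg : ContDiff ℝ ∞ g) : ContDiff ℝ ∞ (dirEnergy c v g) :=
  ContDiff.sum fun i _ => contDiff_const.mul (((hg.dirDeriv (v i)).norm_sq ℝ).div_const 2)

theorem dirOp_dirEnergy {g : H → V} (hg : ContDiff ℝ ∞ g) (p : H) :
    dirOp c v v₀ (dirEnergy c v g) p
      = ∑ i, c i * ⟪dirDeriv (v i) (dirOp c v v₀ g) p, dirDeriv (v i) g p⟫
        - ∑ i, ∑ k, c i * c k * ‖dirDeriv (v i) (dirDeriv (v k) g) p‖ ^ 2 := by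
  have hsq : ∀ i, ContDiff ℝ ∞ fun p => ‖dirDeriv (v i) g p‖ ^ 2 / 2 := fun i =>
    ((hg.dirDeriv (v i)).norm_sq ℝ).div_const 2
  have hlin := dirOp_fun_sum_smul c v v₀ (s := Finset.univ) (fun i _ => hsq i) c
  simp only [smul_eq_mul] at hlin
  unfold dirEnergy
  rw [hlin]
  simp only [dirOp_half_norm_sq c v v₀ (hg.dirDeriv _), dirDeriv_dirOp c v v₀ hg, mul_sub,
    Finset.sum_sub_distrib, Finset.mul_sum]
  congr 1
  rw [Finset.sum_comm]
  exact Finset.sum_congr rfl fun i _ => Finset.sum_congr rfl fun k _ => by ring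

theorem dirOp_dirEnergy_nonpos {g : H → V} (hg : ContDiff ℝ ∞ g) (hc : ∀ i, 0 ≤ c i)
    (hPg : dirOp c v v₀ g = 0) (p : H) : dirOp c v v₀ (dirEnergy c v g) p ≤ 0 := by
  have hDP : ∀ i, dirDeriv (v i) (dirOp c v v₀ g) p = 0 := fun i => by
    simp [hPg, dirDeriv]
  rw [dirOp_dirEnergy c v v₀ hg, sub_nonpos]
  simp only [hDP, inner_zero_left, mul_zero, Finset.sum_const_zero]
  exact Finset.sum_nonneg fun i _ => Finset.sum_nonneg fun k _ =>
    mul_nonneg (mul_nonneg (hc i) (hc k)) (sq_nonneg _)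

end Energy

section SpaceTime

variable {n : ℕ} {V : Type*} [NormedAddCommGroup V] [NormedSpace ℝ V]

/-- With these weights and directions, `dirOp` is `-ε ∂²ₜ - Δ + ∂ₜ` (with `v₀ = ∂ₜ`) and
`dirEnergy` is `e_ε`. -/
noncomputable def spaceTimeDir (n : ℕ) : Option (Fin n) → EuclideanSpace ℝ (Fin n) × ℝ
  | none => (0, 1)
  | some j => (EuclideanSpace.single j 1, 0)

noncomputable def spaceTimeWeight (n : ℕ) (ε : ℝ) : Option (Fin n) → ℝ
  | none => ε
  | some _ => 1

variable {u : EuclideanSpace ℝ (Fin n) → ℝ → V} {g : EuclideanSpace ℝ (Fin n) × ℝ → V}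

theorem pt_eq_dirDeriv (hug : ∀ y s, u y s = g (y, s)) (hg : Differentiable ℝ g)
    (x : EuclideanSpace ℝ (Fin n)) (t : ℝ) :
    pt u x t = dirDeriv (spaceTimeDir n none) g (x, t) := by
  have hc : HasDerivAt (fun s : ℝ => (x, s)) ((0 : EuclideanSpace ℝ (Fin n)), (1 : ℝ)) t :=
    (hasDerivAt_const t x).prodMk (hasDerivAt_id t)
  simp only [pt, hug]
  exact ((hg _).hasFDerivAt.comp_hasDerivAt t hc).deriv

theorem px_eq_dirDeriv (hug : ∀ y s, u y s = g (y, s)) (hg : Differentiable ℝ g) (j : Fin n)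
    (x : EuclideanSpace ℝ (Fin n)) (t : ℝ) :
    px u j x t = dirDeriv (spaceTimeDir n (some j)) g (x, t) := by
  have hc : HasFDerivAt (fun y => (y, t)) ((ContinuousLinearMap.id ℝ _).prod 0) x :=
    (hasFDerivAt_id x).prodMk (hasFDerivAt_const t x)
  simp only [px, hug]
  rw [show (fun y => g (y, t)) = g ∘ fun y => (y, t) from rfl,
    ((hg _).hasFDerivAt.comp x hc).fderiv]
  rfl

theorem smul_ptt_sub_lapv_add_pt_eq_dirOp (hug : ∀ y s, u y s = g (y, s))
    (hg : ContDiff ℝ ∞ g) (ε : ℝ) (x : EuclideanSpace ℝ (Fin n)) (t : ℝ) :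
    (-ε) • ptt u x t - lapv u x t + pt u x t
      = dirOp (spaceTimeWeight n ε) (spaceTimeDir n) (spaceTimeDir n none) g (x, t) := by
  have hdiff : ∀ {f : EuclideanSpace ℝ (Fin n) × ℝ → V}, ContDiff ℝ ∞ f → Differentiable ℝ f :=
    fun hf => hf.differentiable (by simp)
  have hpt := pt_eq_dirDeriv hug (hdiff hg)
  have hlap : lapv u x t = ∑ j, dirDeriv (spaceTimeDir n (some j))
      (dirDeriv (spaceTimeDir n (some j)) g) (x, t) :=
    Finset.sum_congr rfl fun j _ =>
      px_eq_dirDeriv (px_eq_dirDeriv hug (hdiff hg) j) (hdiff (hg.dirDeriv _)) j x t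
  rw [ptt, hlap, pt_eq_dirDeriv hpt (hdiff (hg.dirDeriv _)), hpt]
  simp only [dirOp, Fintype.sum_option, spaceTimeWeight, one_smul, neg_smul]
  abel

theorem dirEnergy_spaceTimeWeight (hug : ∀ y s, u y s = g (y, s)) (hg : Differentiable ℝ g)
    (ε : ℝ) (x : EuclideanSpace ℝ (Fin n)) (t : ℝ) :
    dirEnergy (spaceTimeWeight n ε) (spaceTimeDir n) g (x, t)
      = ε / 2 * ‖pt u x t‖ ^ 2 + 1 / 2 * ∑ j, ‖px u j x t‖ ^ 2 := by
  simp only [dirEnergy, Fintype.sum_option, spaceTimeWeight, one_mul, pt_eq_dirDeriv hug hg,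
    px_eq_dirDeriv hug hg, ← Finset.sum_div]
  ring

end SpaceTime

theorem stmt_12_general (n L : ℕ) (ε : ℝ) (hε : 0 < ε)
    (u : EuclideanSpace ℝ (Fin n) → ℝ → EuclideanSpace ℝ (Fin L))
    (hu : ContDiff ℝ (⊤ : ℕ∞) (fun p : EuclideanSpace ℝ (Fin n) × ℝ => u p.1 p.2))
    (e : EuclideanSpace ℝ (Fin n) → ℝ → ℝ)
    (he : ∀ x t, e x t = ε / 2 * ‖pt u x t‖ ^ 2 + 1 / 2 * ∑ j, ‖px u j x t‖ ^ 2)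
    (F : EuclideanSpace ℝ (Fin n) → ℝ → EuclideanSpace ℝ (Fin L))
    (hF : ∀ x t, F x t = (-ε) • ptt u x t - lapv u x t + pt u x t) :
    (∀ (x : EuclideanSpace ℝ (Fin n)) (t : ℝ),
      -ε * ptt e x t - lapv e x t + pt e x t
        = (∑ j, ⟪px F j x t, px u j x t⟫) + ε * ⟪pt F x t, pt u x t⟫
          - (ε ^ 2 * ‖ptt u x t‖ ^ 2
              + 2 * ε * ∑ j, ‖pt (fun y s => px u j y s) x t‖ ^ 2
              + ∑ j, ∑ k, ‖px (fun y s => px u k y s) j x t‖ ^ 2)) ∧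
    ((∀ x t, F x t = 0) →
      ∀ (x : EuclideanSpace ℝ (Fin n)) (t : ℝ),
        -ε * ptt e x t - lapv e x t + pt e x t ≤ 0) := by
  set w : EuclideanSpace ℝ (Fin n) × ℝ → EuclideanSpace ℝ (Fin L) := fun p => u p.1 p.2
  set c := spaceTimeWeight n ε
  set v := spaceTimeDir n
  have hdiff : ∀ {f : EuclideanSpace ℝ (Fin n) × ℝ → EuclideanSpace ℝ (Fin L)},
      ContDiff ℝ ∞ f → Differentiable ℝ f := fun hf => hf.differentiable (by simp)
  have huw : ∀ y s, u y s = w (y, s) := fun _ _ => rfl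
  have hew : ∀ y s, e y s = dirEnergy c v w (y, s) := fun y s =>
    (he y s).trans (dirEnergy_spaceTimeWeight huw (hdiff hu) ε y s).symm
  have hFw : ∀ y s, F y s = dirOp c v (v none) w (y, s) := fun y s =>
    (hF y s).trans (smul_ptt_sub_lapv_add_pt_eq_dirOp huw hu ε y s)
  have hlhs : ∀ x t, -ε * ptt e x t - lapv e x t + pt e x t
      = dirOp c v (v none) (dirEnergy c v w) (x, t) := fun x t => by
    simpa only [smul_eq_mul] using smul_ptt_sub_lapv_add_pt_eq_dirOp hew (hu.dirEnergy c v) ε x t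
  refine ⟨fun x t => ?_, fun hF0 x t => ?_⟩
  · have hpt := pt_eq_dirDeriv huw (hdiff hu)
    have hpx := px_eq_dirDeriv huw (hdiff hu)
    have hPw := hdiff (hu.dirOp c v (v none))
    rw [hlhs, dirOp_dirEnergy c v _ hu]
    simp only [ptt, pt_eq_dirDeriv hpt (hdiff (hu.dirDeriv _)),
      pt_eq_dirDeriv (hpx _) (hdiff (hu.dirDeriv _)),
      px_eq_dirDeriv (hpx _) (hdiff (hu.dirDeriv _))]
    simp only [hpt, hpx, pt_eq_dirDeriv hFw hPw, px_eq_dirDeriv hFw hPw,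
      Fintype.sum_option, c, v, spaceTimeWeight, one_mul, mul_one, Finset.sum_add_distrib,
      dirDeriv_comm (hu.of_le (WithTop.coe_le_coe.2 le_top)) (spaceTimeDir n (some _))
        (spaceTimeDir n none)]
    simp only [← Finset.mul_sum]
    ring
  · rw [hlhs]
    refine dirOp_dirEnergy_nonpos c v _ hu (fun i => ?_) (funext fun p => ?_) _
    · cases i <;> simp [c, spaceTimeWeight, hε.le]
    · exact (hFw p.1 p.2).symm.trans (hF0 p.1 p.2)

/-- Bochner-type identity for the energy density
`e_ε(u) = (ε/2)|∂ₜu|² + (1/2)|∇u|²` of a smooth map `u`, with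
`F = −ε ∂²ₜ u − Δu + ∂ₜ u`; in particular if `F ≡ 0` then
`−ε ∂²ₜ e_ε − Δ e_ε + ∂ₜ e_ε ≤ 0`. -/
theorem stmt_12 (n L : ℕ) (hn : 1 ≤ n) (hL : 1 ≤ L) (ε : ℝ) (hε : 0 < ε)
    (u : EuclideanSpace ℝ (Fin n) → ℝ → EuclideanSpace ℝ (Fin L))
    (hu : ContDiff ℝ (⊤ : ℕ∞) (fun p : EuclideanSpace ℝ (Fin n) × ℝ => u p.1 p.2))
    (e : EuclideanSpace ℝ (Fin n) → ℝ → ℝ)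
    (he : ∀ x t, e x t = ε / 2 * ‖pt u x t‖ ^ 2 + 1 / 2 * ∑ j, ‖px u j x t‖ ^ 2)
    (F : EuclideanSpace ℝ (Fin n) → ℝ → EuclideanSpace ℝ (Fin L))
    (hF : ∀ x t, F x t = (-ε) • ptt u x t - lapv u x t + pt u x t) :
    (∀ (x : EuclideanSpace ℝ (Fin n)) (t : ℝ),
      -ε * ptt e x t - lapv e x t + pt e x t
        = (∑ j, ⟪px F j x t, px u j x t⟫) + ε * ⟪pt F x t, pt u x t⟫
          - (ε ^ 2 * ‖ptt u x t‖ ^ 2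
              + 2 * ε * ∑ j, ‖pt (fun y s => px u j y s) x t‖ ^ 2
              + ∑ j, ∑ k, ‖px (fun y s => px u k y s) j x t‖ ^ 2)) ∧
    ((∀ x t, F x t = 0) →
      ∀ (x : EuclideanSpace ℝ (Fin n)) (t : ℝ),
        -ε * ptt e x t - lapv e x t + pt e x t ≤ 0) :=
  stmt_12_general n L ε hε u hu e he F hF
end
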